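/- (Jensen's maximum principle) Let n ≥ 1, let φ : ℝ^n → ℝ be semiconvex with constant C ≥ 0, let x₀ ∈ ℝ^n and ρ > 0, and assume x₀ is a strict maximum of φ over the closed ball B̄(x₀, ρ), i.e. φ(x) < φ(x₀) for all x ∈ B̄(x₀, ρ) with x ≠ x₀. Then for every δ > 0 the set K_δ = { x ∈ B(x₀, ρ) : there exists p ∈ ℝ^n with |p| ≤ δ such that y ↦ φ(y) + ⟨p, y⟩ attains its maximum over B̄(x₀, ρ) at x } has positive Lebesgue measure. -/

import Mathlib

/-!
Put `ψ = φ + C/2 ‖·‖²`, a convex function. If `x` maximizes `φ + ⟪p, ·⟫` over `B̄(x₀, ρ)`, then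
`ψ` is touched from above at `x` by a paraboloid of opening `C` with slope `C x - p`, and for a
convex function such a slope at an interior point is a subgradient. Playing the paraboloid at one
contact point against the subgradient at another shows that `p` is a `3C`-Lipschitz function of
the contact point `x` in `B(x₀, ρ/3)`. Because the maximum at `x₀` is strict, every slope `p` of
small norm has a contact point, and it lies in `B(x₀, ρ/3)`. So a Lipschitz map sends the contact
set onto a ball of slopes; as Lipschitz maps preserve Lebesgue-null sets, the contact set is not
null.
-/

open scoped RealInnerProductSpace Topology
open Filter Asymptotics Metric MeasureTheory

noncomputable section

abbrev E (n : ℕ) : Type := EuclideanSpace ℝ (Fin n)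

section LipschitzImage

variable {F : Type*} [NormedAddCommGroup F] [NormedSpace ℝ F] [FiniteDimensional ℝ F]
  [MeasurableSpace F] [BorelSpace F] (μ : Measure F) [μ.IsAddHaarMeasure]

/-- `μH[finrank ℝ F]` is an additive Haar measure, hence has the same null sets as `μ`, and a
`K`-Lipschitz map multiplies it by at most `K ^ finrank ℝ F`. -/
theorem LipschitzOnWith.addHaar_image_eq_zero {f : F → F} {K : NNReal} {s : Set F}
    (hf : LipschitzOnWith K f s) (hs : μ s = 0) : μ (f '' s) = 0 := by
  set d : ℝ := (Module.finrank ℝ F : ℝ)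
  have hHs : μH[d] s = 0 := Measure.absolutelyContinuous_isAddHaarMeasure μH[d] μ hs
  have hHfs : μH[d] (f '' s) = 0 := by
    simpa [hHs] using hf.hausdorffMeasure_image_le (d := d) (Nat.cast_nonneg _)
  exact Measure.absolutelyContinuous_isAddHaarMeasure μ μH[d] hHfs

theorem addHaar_pos_of_lipschitz_relation {R : F → F → Prop} {L : ℝ}
    (hR : ∀ x x' p p', R x p → R x' p' → ‖p - p'‖ ≤ L * ‖x - x'‖)
    (hrange : 0 < μ {p | ∃ x, R x p}) : 0 < μ {x | ∃ p, R x p} := by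
  set f : F → F := fun x => Classical.epsilon (R x)
  have hf : ∀ x p, R x p → f x = p := fun x p hxp => by
    simpa [sub_eq_zero] using hR x x (f x) p (Classical.epsilon_spec ⟨p, hxp⟩) hxp
  have hLip : LipschitzOnWith L.toNNReal f {x | ∃ p, R x p} := by
    refine LipschitzOnWith.of_dist_le_mul fun x ⟨p, hxp⟩ x' ⟨p', hxp'⟩ => ?_
    rw [dist_eq_norm, dist_eq_norm, hf x p hxp, hf x' p' hxp']
    exact (hR x x' p p' hxp hxp').trans
      (mul_le_mul_of_nonneg_right (Real.le_coe_toNNReal L) (norm_nonneg _))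
  have himage : {p | ∃ x, R x p} ⊆ f '' {x | ∃ p, R x p} :=
    fun p ⟨x, hxp⟩ => ⟨x, ⟨p, hxp⟩, hf x p hxp⟩
  refine pos_iff_ne_zero.2 fun h0 => hrange.ne' ?_
  exact measure_mono_null himage (hLip.addHaar_image_eq_zero μ h0)

end LipschitzImage

section ConvexSlopes

variable {F : Type*} [NormedAddCommGroup F] [InnerProductSpace ℝ F]

/-- Midpoint convexity at `x` converts the upper bound at `x - t • (y - x)` into a lower bound at
`x + t • (y - x)`, which convexity compares with `ψ y`; the quadratic error is `O(t)` after
dividing by `t`. -/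
theorem ConvexOn.add_inner_le_of_eventually_le_quadratic {s : Set F} {ψ : F → ℝ}
    (hψ : ConvexOn ℝ s ψ) {x y u : F} {C : ℝ} (hs : s ∈ 𝓝 x) (hy : y ∈ s)
    (hup : ∀ᶠ z in 𝓝 x, ψ z ≤ ψ x + ⟪u, z - x⟫ + C / 2 * ‖z - x‖ ^ 2) :
    ψ x + ⟪u, y - x⟫ ≤ ψ y := by
  set h := y - x
  have hx : x ∈ s := mem_of_mem_nhds hs
  have hlim : Tendsto (fun t : ℝ => ψ y + C / 2 * t * ‖h‖ ^ 2) (𝓝[>] 0) (𝓝 (ψ y)) := by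
    have hc : Continuous fun t : ℝ => ψ y + C / 2 * t * ‖h‖ ^ 2 := by fun_prop
    exact (hc.tendsto' 0 _ (by simp)).mono_left nhdsWithin_le_nhds
  have hback : Tendsto (fun t : ℝ => x - t • h) (𝓝[>] 0) (𝓝 x) := by
    have hc : Continuous fun t : ℝ => x - t • h := by fun_prop
    exact (hc.tendsto' 0 _ (by simp)).mono_left nhdsWithin_le_nhds
  refine ge_of_tendsto hlim ?_
  filter_upwards [hback hs, hback.eventually hup, Ioo_mem_nhdsGT one_pos]
    with t hts htup ⟨ht0, ht1⟩
  have hfwd : x + t • h = (1 - t) • x + t • y := by simp only [h]; module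
  have hfwd_mem : x + t • h ∈ s := hfwd ▸ hψ.1 hx hy (by linarith) ht0.le (by ring)
  have hconv : ψ (x + t • h) ≤ (1 - t) * ψ x + t * ψ y := by
    rw [hfwd]; exact hψ.2 hx hy (by linarith) ht0.le (by ring)
  have hmid : ψ x ≤ 1 / 2 * ψ (x + t • h) + 1 / 2 * ψ (x - t • h) := by
    have hmid := hψ.2 hfwd_mem hts (by norm_num : (0 : ℝ) ≤ 1 / 2)
      (by norm_num : (0 : ℝ) ≤ 1 / 2) (by norm_num)
    rwa [show (1 / 2 : ℝ) • (x + t • h) + (1 / 2 : ℝ) • (x - t • h) = x by module] at hmid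
  have hback_up : ψ (x - t • h) ≤ ψ x - t * ⟪u, h⟫ + C / 2 * t ^ 2 * ‖h‖ ^ 2 := by
    have hdiff : x - t • h - x = -(t • h) := by abel
    rw [hdiff, inner_neg_right, real_inner_smul_right, norm_neg, norm_smul, Real.norm_eq_abs,
      abs_of_pos ht0] at htup
    linarith
  have key : t * (ψ x + ⟪u, h⟫) ≤ t * (ψ y + C / 2 * t * ‖h‖ ^ 2) := by nlinarith
  exact le_of_mul_le_mul_left key ht0

theorem exists_norm_le_one_inner_eq_norm (v : F) : ∃ w : F, ‖w‖ ≤ 1 ∧ ⟪v, w⟫ = ‖v‖ := by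
  rcases eq_or_ne v 0 with rfl | hv
  · exact ⟨0, by simp, by simp⟩
  · refine ⟨‖v‖⁻¹ • v, (norm_smul_inv_norm hv).le, ?_⟩
    rw [real_inner_smul_right, real_inner_self_eq_norm_sq]
    field_simp

/-- Testing the two slope inequalities at `y = x' + s • w`, with `w` the unit vector along
`u' - u`, gives `s ‖u' - u‖ ≤ C/2 (‖x - x'‖ + s)²`; then let `s ↓ ‖x - x'‖`. -/
theorem norm_sub_le_of_add_inner_le_of_le_quadratic {ψ : F → ℝ} {x x' u u' : F} {C r : ℝ}
    (hC : 0 ≤ C) (hsub : ψ x + ⟪u, x' - x⟫ ≤ ψ x')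
    (hsub' : ∀ y ∈ closedBall x' r, ψ x' + ⟪u', y - x'⟫ ≤ ψ y)
    (hup : ∀ y ∈ closedBall x' r, ψ y ≤ ψ x + ⟪u, y - x⟫ + C / 2 * ‖y - x‖ ^ 2)
    (hxx' : ‖x - x'‖ < r) : ‖u - u'‖ ≤ 2 * C * ‖x - x'‖ := by
  set d := ‖x - x'‖
  have hbase : ∀ y ∈ closedBall x' r, ⟪u' - u, y - x'⟫ ≤ C / 2 * ‖y - x‖ ^ 2 := by
    intro y hy
    have hshift : ⟪u, y - x⟫ - ⟪u, x' - x⟫ = ⟪u, y - x'⟫ := by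
      rw [← inner_sub_right, sub_sub_sub_cancel_right]
    linarith [hup y hy, hsub' y hy, inner_sub_left (𝕜 := ℝ) u' u (y - x')]
  obtain ⟨w, hw, hvw⟩ := exists_norm_le_one_inner_eq_norm (u' - u)
  have hstep : ∀ s, 0 ≤ s → s ≤ r → s * ‖u' - u‖ ≤ C / 2 * (d + s) ^ 2 := by
    intro s hs hsr
    have hsw : ‖s • w‖ ≤ s := by
      rw [norm_smul, Real.norm_of_nonneg hs]; exact mul_le_of_le_one_right hs hw
    have hy : x' + s • w ∈ closedBall x' r := by
      rw [mem_closedBall_iff_norm, add_sub_cancel_left]; linarith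
    have hdist : ‖x' + s • w - x‖ ≤ d + s := by
      rw [add_sub_right_comm]
      linarith [norm_add_le (x' - x) (s • w), norm_sub_rev x' x]
    have h := hbase _ hy
    rw [add_sub_cancel_left, real_inner_smul_right, hvw] at h
    calc s * ‖u' - u‖ ≤ C / 2 * ‖x' + s • w - x‖ ^ 2 := h
      _ ≤ C / 2 * (d + s) ^ 2 := by gcongr
  have hlim : Tendsto (fun ε : ℝ => 2 * C * (d + ε)) (𝓝[>] 0) (𝓝 (2 * C * d)) := by
    have hc : Continuous fun ε : ℝ => 2 * C * (d + ε) := by fun_prop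
    exact (hc.tendsto' 0 _ (by simp)).mono_left nhdsWithin_le_nhds
  rw [norm_sub_rev]
  refine ge_of_tendsto hlim ?_
  filter_upwards [Ioo_mem_nhdsGT (sub_pos.2 hxx')] with ε ⟨hε0, hεr⟩
  have hdε : 0 < d + ε := add_pos_of_nonneg_of_pos (norm_nonneg _) hε0
  have hsq : (d + (d + ε)) ^ 2 ≤ (2 * (d + ε)) ^ 2 :=
    pow_le_pow_left₀ (by positivity) (by linarith) 2
  have h := hstep (d + ε) hdε.le (by linarith)
  have h' : (d + ε) * ‖u' - u‖ ≤ (d + ε) * (2 * C * (d + ε)) := by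
    nlinarith [mul_le_mul_of_nonneg_left hsq hC]
  exact le_of_mul_le_mul_left h' hdε

end ConvexSlopes

section MaximumPoints

variable {F : Type*} [NormedAddCommGroup F] [InnerProductSpace ℝ F] {φ : F → ℝ} {s : Set F}
  {p x : F}

theorem add_sq_norm_le_of_isMaxOn_add_inner (C : ℝ) (hmax : IsMaxOn (fun y => φ y + ⟪p, y⟫) s x)
    {y : F} (hy : y ∈ s) :
    φ y + C / 2 * ‖y‖ ^ 2 ≤ φ x + C / 2 * ‖x‖ ^ 2 + ⟪C • x - p, y - x⟫ + C / 2 * ‖y - x‖ ^ 2 := by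
  have hle : φ y + ⟪p, y⟫ ≤ φ x + ⟪p, x⟫ := isMaxOn_iff.mp hmax y hy
  have hsq : ‖y‖ ^ 2 = ‖x‖ ^ 2 + 2 * ⟪x, y - x⟫ + ‖y - x‖ ^ 2 := by
    simpa using norm_add_sq_real x (y - x)
  rw [hsq, inner_sub_left, real_inner_smul_left, inner_sub_right p y x]
  linarith

theorem add_inner_le_of_isMaxOn_add_inner {C : ℝ}
    (hφ : ConvexOn ℝ Set.univ (fun x => φ x + C / 2 * ‖x‖ ^ 2)) (hs : s ∈ 𝓝 x)
    (hmax : IsMaxOn (fun y => φ y + ⟪p, y⟫) s x) (y : F) :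
    φ x + C / 2 * ‖x‖ ^ 2 + ⟪C • x - p, y - x⟫ ≤ φ y + C / 2 * ‖y‖ ^ 2 :=
  hφ.add_inner_le_of_eventually_le_quadratic univ_mem (Set.mem_univ y)
    (eventually_of_mem hs fun _ hz => add_sq_norm_le_of_isMaxOn_add_inner C hmax hz)

theorem norm_sub_le_of_isMaxOn_add_inner {x₀ x' p' : F} {C ρ : ℝ} (hC : 0 ≤ C)
    (hφ : ConvexOn ℝ Set.univ (fun x => φ x + C / 2 * ‖x‖ ^ 2))
    (hx : x ∈ ball x₀ (ρ / 3)) (hx' : x' ∈ ball x₀ (ρ / 3))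
    (hmax : IsMaxOn (fun y => φ y + ⟪p, y⟫) (closedBall x₀ ρ) x)
    (hmax' : IsMaxOn (fun y => φ y + ⟪p', y⟫) (closedBall x₀ ρ) x') :
    ‖p - p'‖ ≤ 3 * C * ‖x - x'‖ := by
  have hρ : 0 < ρ := by linarith [pos_of_mem_ball hx]
  have hnhds : ∀ z ∈ ball x₀ (ρ / 3), closedBall x₀ ρ ∈ 𝓝 z := fun z hz =>
    mem_of_superset (isOpen_ball.mem_nhds (ball_subset_ball (by linarith) hz))
      ball_subset_closedBall
  have hsubset : closedBall x' (2 * ρ / 3) ⊆ closedBall x₀ ρ :=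
    closedBall_subset_closedBall' (by linarith [mem_ball.mp hx'])
  have hdist : ‖x - x'‖ < 2 * ρ / 3 := by
    rw [← dist_eq_norm]; linarith [dist_triangle_right x x' x₀, mem_ball.mp hx, mem_ball.mp hx']
  have hslope : ‖(C • x - p) - (C • x' - p')‖ ≤ 2 * C * ‖x - x'‖ :=
    norm_sub_le_of_add_inner_le_of_le_quadratic (ψ := fun z => φ z + C / 2 * ‖z‖ ^ 2) hC
      (add_inner_le_of_isMaxOn_add_inner hφ (hnhds x hx) hmax x')
      (fun y _ => add_inner_le_of_isMaxOn_add_inner hφ (hnhds x' hx') hmax' y)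
      (fun y hy => add_sq_norm_le_of_isMaxOn_add_inner C hmax (hsubset hy)) hdist
  calc ‖p - p'‖ = ‖C • (x - x') - ((C • x - p) - (C • x' - p'))‖ := by congr 1; module
    _ ≤ ‖C • (x - x')‖ + ‖(C • x - p) - (C • x' - p')‖ := norm_sub_le _ _
    _ ≤ C * ‖x - x'‖ + 2 * C * ‖x - x'‖ := by
      rw [norm_smul, Real.norm_of_nonneg hC]; linarith
    _ = 3 * C * ‖x - x'‖ := by ring

theorem exists_pos_forall_isMaxOn_add_inner_mem_ball [ProperSpace F] {x₀ : F} {ρ r : ℝ}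
    (hφ : ContinuousOn φ (closedBall x₀ ρ))
    (hstrict : ∀ x ∈ closedBall x₀ ρ, x ≠ x₀ → φ x < φ x₀) (hρ : 0 ≤ ρ) (hr : 0 < r) :
    ∃ δ > 0, ∀ p x, ‖p‖ ≤ δ → x ∈ closedBall x₀ ρ →
      IsMaxOn (fun y => φ y + ⟪p, y⟫) (closedBall x₀ ρ) x → x ∈ ball x₀ r := by
  obtain ⟨η, hη, hgap⟩ := ((isCompact_closedBall x₀ ρ).diff isOpen_ball).exists_forall_le'
    (f := fun y => φ x₀ - φ y) (a := 0) (continuousOn_const.sub (hφ.mono Set.sdiff_subset))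
    fun y hy => sub_pos.2 <| hstrict y hy.1 fun h => hy.2 (by rw [h]; exact mem_ball_self hr)
  refine ⟨η / (ρ + 1), by positivity, fun p x hp hx hmax => ?_⟩
  by_contra hxr
  have hφx : η ≤ φ x₀ - φ x := hgap x ⟨hx, hxr⟩
  have hmax₀ : φ x₀ + ⟪p, x₀⟫ ≤ φ x + ⟪p, x⟫ := isMaxOn_iff.mp hmax x₀ (mem_closedBall_self hρ)
  have hinner : ⟪p, x - x₀⟫ ≤ η / (ρ + 1) * ρ :=
    (real_inner_le_norm _ _).trans
      (mul_le_mul hp (mem_closedBall_iff_norm.mp hx) (norm_nonneg _) (by positivity))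
  have hsmall : η / (ρ + 1) * ρ < η := by
    rw [div_mul_eq_mul_div, div_lt_iff₀ (by positivity)]; linarith
  linarith [inner_sub_right (𝕜 := ℝ) p x x₀]

end MaximumPoints

theorem jensen_maximum_principle_general (n : ℕ)
    (φ : E n → ℝ) (C : ℝ) (hC : 0 ≤ C)
    (hφ : ConvexOn ℝ Set.univ (fun x => φ x + (C / 2) * ‖x‖ ^ 2))
    (x₀ : E n) (ρ : ℝ) (hρ : 0 < ρ)
    (hstrict : ∀ x ∈ closedBall x₀ ρ, x ≠ x₀ → φ x < φ x₀)
    (δ : ℝ) (hδ : 0 < δ) :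
    0 < volume {x ∈ ball x₀ ρ | ∃ p : E n, ‖p‖ ≤ δ ∧
      ∀ y ∈ closedBall x₀ ρ, φ y + ⟪p, y⟫ ≤ φ x + ⟪p, x⟫} := by
  have hφc : Continuous φ := by
    have hψc := continuousOn_univ.mp (hφ.continuousOn isOpen_univ)
    exact (hψc.sub (by fun_prop : Continuous fun x : E n => C / 2 * ‖x‖ ^ 2)).congr
      fun x => add_sub_cancel_right _ _
  obtain ⟨δ₁, hδ₁, hloc⟩ := exists_pos_forall_isMaxOn_add_inner_mem_ball hφc.continuousOn
    hstrict hρ.le (by positivity : 0 < ρ / 3)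
  set R : E n → E n → Prop := fun x p => x ∈ ball x₀ (ρ / 3) ∧ ‖p‖ ≤ min δ δ₁ ∧
    IsMaxOn (fun y => φ y + ⟪p, y⟫) (closedBall x₀ ρ) x
  have hrange : closedBall 0 (min δ δ₁) ⊆ {p | ∃ x, R x p} := by
    intro p hp
    rw [mem_closedBall_zero_iff] at hp
    have hcont : Continuous fun y => φ y + ⟪p, y⟫ := by fun_prop
    obtain ⟨x, hx, hmax⟩ := (isCompact_closedBall x₀ ρ).exists_isMaxOn
      (nonempty_closedBall.mpr hρ.le) hcont.continuousOn
    exact ⟨x, hloc p x (hp.trans (min_le_right _ _)) hx hmax, hp, hmax⟩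
  have hdom := addHaar_pos_of_lipschitz_relation volume
    (fun x x' p p' ⟨hx, _, hmax⟩ ⟨hx', _, hmax'⟩ =>
      norm_sub_le_of_isMaxOn_add_inner hC hφ hx hx' hmax hmax')
    ((measure_closedBall_pos volume 0 (lt_min hδ hδ₁)).trans_le (measure_mono hrange))
  refine hdom.trans_le (measure_mono fun x ⟨p, hx, hp, hmax⟩ => ?_)
  exact ⟨ball_subset_ball (by linarith) hx, p, hp.trans (min_le_left _ _), isMaxOn_iff.mp hmax⟩

/-- Jensen's maximum principle: if a semiconvex `φ` has a strict maximum over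
`B̄(x₀, ρ)` at `x₀`, then for every `δ > 0` the set of points `x ∈ B(x₀, ρ)` at which
some linear perturbation `y ↦ φ(y) + ⟨p, y⟩` with `|p| ≤ δ` attains its maximum over
`B̄(x₀, ρ)` has positive Lebesgue measure. -/
theorem jensen_maximum_principle (n : ℕ) (hn : 1 ≤ n)
    (φ : E n → ℝ) (C : ℝ) (hC : 0 ≤ C)
    (hφ : ConvexOn ℝ Set.univ (fun x => φ x + (C / 2) * ‖x‖ ^ 2))
    (x₀ : E n) (ρ : ℝ) (hρ : 0 < ρ)
    (hstrict : ∀ x ∈ closedBall x₀ ρ, x ≠ x₀ → φ x < φ x₀)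
    (δ : ℝ) (hδ : 0 < δ) :
    0 < volume {x ∈ ball x₀ ρ | ∃ p : E n, ‖p‖ ≤ δ ∧
      ∀ y ∈ closedBall x₀ ρ, φ y + ⟪p, y⟫ ≤ φ x + ⟪p, x⟫} :=
  jensen_maximum_principle_general n φ C hC hφ x₀ ρ hρ hstrict δ hδ
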